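/- arXiv:1804.03968 — 2 statements merged into one kernel-verified Lean document; each statement's English description precedes it below -/
import Mathlib

section
/- Let α, ω₀ > 0 with α < ω₀, let H = i·!![0, 1; -ω₀², -2α], and suppose X is a 2×2 complex matrix with HX = XH†. Then X = 0. -/
/-!
By Cayley–Hamilton, `H X = X Hᴴ` forces `X · p(Hᴴ) = 0` for the characteristic polynomial `p`
of `H`, so it suffices that `p(Hᴴ)` is invertible. For a `2 × 2` matrix, subtracting the
Cayley–Hamilton identity of `Hᴴ` leaves `p(Hᴴ) = (conj (tr H) - tr H) • Hᴴ + (det H - conj (det H))`.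
Here `tr H = -2iα` and `det H = -ω₀²` is real, so `p(Hᴴ) = 4iα • Hᴴ`, which is invertible.
-/

open Matrix Complex Polynomial

namespace Matrix

variable {m n R : Type*} [Fintype m] [DecidableEq m] [Fintype n] [DecidableEq n] [CommRing R]

theorem pow_mul_eq_mul_pow_of_mul_eq_mul {A : Matrix m m R} {B : Matrix n n R} {X : Matrix m n R}
    (hX : A * X = X * B) (k : ℕ) : A ^ k * X = X * B ^ k := by
  induction k with
  | zero => simp
  | succ k ih =>
    rw [pow_succ, Matrix.mul_assoc, hX, ← Matrix.mul_assoc, ih, Matrix.mul_assoc, ← pow_succ]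

theorem aeval_mul_eq_mul_aeval_of_mul_eq_mul {A : Matrix m m R} {B : Matrix n n R}
    {X : Matrix m n R} (hX : A * X = X * B) (p : R[X]) : aeval A p * X = X * aeval B p := by
  induction p using Polynomial.induction_on' with
  | add p q hp hq => simp only [map_add, Matrix.add_mul, Matrix.mul_add, hp, hq]
  | monomial k a =>
    simp only [aeval_monomial, Algebra.algebraMap_eq_smul_one, Matrix.smul_mul, Matrix.mul_smul,
      Matrix.one_mul, pow_mul_eq_mul_pow_of_mul_eq_mul hX]

theorem eq_zero_of_mul_eq_mul_of_isUnit_aeval_charpoly {A : Matrix m m R} {B : Matrix n n R}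
    {X : Matrix m n R} (hX : A * X = X * B) (hB : IsUnit (aeval B A.charpoly)) : X = 0 := by
  have hXp : X * aeval B A.charpoly = 0 := by
    rw [← aeval_mul_eq_mul_aeval_of_mul_eq_mul hX, aeval_self_charpoly, Matrix.zero_mul]
  obtain ⟨u, hu⟩ := hB
  calc X = X * (u * ↑u⁻¹ : Matrix n n R) := by simp
    _ = 0 := by rw [← Matrix.mul_assoc, hu, hXp, Matrix.zero_mul]

theorem aeval_conjTranspose_charpoly_fin_two [StarRing R] [Nontrivial R]
    (M : Matrix (Fin 2) (Fin 2) R) :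
    aeval Mᴴ M.charpoly = (star M.trace - M.trace) • Mᴴ + (M.det - star M.det) • 1 := by
  have hCH := aeval_self_charpoly Mᴴ
  rw [charpoly_fin_two, trace_conjTranspose, det_conjTranspose] at hCH
  rw [charpoly_fin_two, ← sub_zero (aeval _ _), ← hCH]
  simp only [map_add, map_sub, map_mul, aeval_C, aeval_X, map_pow, Algebra.algebraMap_eq_smul_one,
    Matrix.smul_mul, Matrix.one_mul]
  module

end Matrix

theorem stmt_9_general (α ω₀ : ℝ) (hα : 0 < α) (hω : 0 < ω₀)
    (H : Matrix (Fin 2) (Fin 2) ℂ)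
    (hH : H = Complex.I • !![0, 1; -(ω₀:ℂ)^2, -2*α])
    (X : Matrix (Fin 2) (Fin 2) ℂ) (hX : H * X = X * Hᴴ) :
    X = 0 := by
  have htrace : H.trace = -2 * α * I := by
    simp [hH, trace_fin_two]
    ring
  have hdet : H.det = -ω₀ ^ 2 := by
    simp [hH, det_fin_two]
    linear_combination (ω₀ : ℂ) ^ 2 * I_sq
  have hcharpoly : aeval Hᴴ H.charpoly = (4 * α * I) • Hᴴ := by
    rw [aeval_conjTranspose_charpoly_fin_two, htrace, hdet]
    simp
    congr 1
    ring
  refine eq_zero_of_mul_eq_mul_of_isUnit_aeval_charpoly hX ?_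
  rw [hcharpoly, isUnit_iff_isUnit_det, isUnit_iff_ne_zero]
  simp [hdet, hα.ne', hω.ne']

theorem stmt_9 (α ω₀ : ℝ) (hα : 0 < α) (hω : 0 < ω₀) (h : α < ω₀)
    (H : Matrix (Fin 2) (Fin 2) ℂ)
    (hH : H = Complex.I • !![0, 1; -(ω₀:ℂ)^2, -2*α])
    (X : Matrix (Fin 2) (Fin 2) ℂ) (hX : H * X = X * Hᴴ) :
    X = 0 :=
  stmt_9_general α ω₀ hα hω H hH X hX
end

section
/- Let α, ω₀ > 0 with α > ω₀. Set a = α + √(α²-ω₀²), b = α - √(α²-ω₀²), ρ = -iα - i√(α²-ω₀²), γ = 1/(2√(α²-ω₀²)), ω = 2i√(α²-ω₀²). Then ωγ = i, (a-b)γ = 1, and the matrix !![ωγa + ρ, ωγ; -ωγab, -ωγb + ρ] equals the RLC Hamiltonian H = i·!![0, 1; -ω₀², -2α]. -/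
open Matrix Complex

theorem pseudoFermion_matrix_eq_smul {ω γ a b ρ α c : ℂ} (hωγ : ω * γ = I) (hρ : ρ = -I * a)
    (hsum : a + b = 2 * α) (hprod : a * b = c) :
    !![ω*γ*a + ρ, ω*γ; -(ω*γ*a*b), -(ω*γ*b) + ρ] = I • !![0, 1; -c, -2*α] := by
  obtain rfl : b = 2 * α - a := by linear_combination hsum
  subst hρ hprod
  rw [hωγ]
  ext i j
  fin_cases i <;> fin_cases j <;>
    simp only [Fin.zero_eta, Fin.mk_one, Fin.isValue, of_apply, cons_val', cons_val_zero,
      cons_val_one, cons_val_fin_one, Matrix.smul_apply, smul_eq_mul] <;> ring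

theorem stmt_16_general (α ω₀ : ℝ) (hω : 0 < ω₀) (h : α > ω₀)
    (a b ρ γ ω : ℂ)
    (ha : a = (α:ℂ) + Real.sqrt (α^2 - ω₀^2))
    (hb : b = (α:ℂ) - Real.sqrt (α^2 - ω₀^2))
    (hρ : ρ = -Complex.I * α - Complex.I * Real.sqrt (α^2 - ω₀^2))
    (hγ : γ = 1 / (2 * Real.sqrt (α^2 - ω₀^2)))
    (hω' : ω = 2 * Complex.I * Real.sqrt (α^2 - ω₀^2)) :
    ω * γ = Complex.I ∧ (a - b) * γ = 1 ∧
    !![ω*γ*a + ρ, ω*γ; -(ω*γ*a*b), -(ω*γ*b) + ρ] =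
      Complex.I • !![0, 1; -(ω₀:ℂ)^2, -2*α] := by
  have hdisc : 0 < α ^ 2 - ω₀ ^ 2 := by nlinarith
  set s : ℂ := (Real.sqrt (α ^ 2 - ω₀ ^ 2) : ℂ) with hs_def
  have hs : s ≠ 0 := ofReal_ne_zero.mpr (Real.sqrt_pos.mpr hdisc).ne'
  have hs_sq : s ^ 2 = (α : ℂ) ^ 2 - (ω₀ : ℂ) ^ 2 := by
    rw [hs_def, ← ofReal_pow, Real.sq_sqrt hdisc.le]; push_cast; ring
  have hωγ : ω * γ = I := by rw [hω', hγ]; field_simp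
  refine ⟨hωγ, by rw [ha, hb, hγ]; field_simp; ring, ?_⟩
  exact pseudoFermion_matrix_eq_smul hωγ (by rw [hρ, ha]; ring) (by rw [ha, hb]; ring)
    (by rw [ha, hb]; linear_combination -hs_sq)

theorem stmt_16 (α ω₀ : ℝ) (hα : 0 < α) (hω : 0 < ω₀) (h : α > ω₀)
    (a b ρ γ ω : ℂ)
    (ha : a = (α:ℂ) + Real.sqrt (α^2 - ω₀^2))
    (hb : b = (α:ℂ) - Real.sqrt (α^2 - ω₀^2))
    (hρ : ρ = -Complex.I * α - Complex.I * Real.sqrt (α^2 - ω₀^2))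
    (hγ : γ = 1 / (2 * Real.sqrt (α^2 - ω₀^2)))
    (hω' : ω = 2 * Complex.I * Real.sqrt (α^2 - ω₀^2)) :
    ω * γ = Complex.I ∧ (a - b) * γ = 1 ∧
    !![ω*γ*a + ρ, ω*γ; -(ω*γ*a*b), -(ω*γ*b) + ρ] =
      Complex.I • !![0, 1; -(ω₀:ℂ)^2, -2*α] :=
  stmt_16_general α ω₀ hω h a b ρ γ ω ha hb hρ hγ hω'
end
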